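/- arXiv:2404.17924 — 3 statements merged into one kernel-verified Lean document; each statement's English description precedes it below -/
import Mathlib

section
/- D ⊆ 𝒢 is a coherent set of desirable gambles if and only if 0 ∉ D and D = desext(E) := posi(E ∪ G₊) for some E ⊆ 𝒢. -/
open scoped BigOperators

universe u v

def GambleSpace (Ω : Type v) : Submodule ℝ (Ω → ℝ) where
  carrier := {f | ∃ M, ∀ ω, |f ω| ≤ M}
  add_mem' := by
    rintro f g ⟨M, hM⟩ ⟨N, hN⟩
    exact ⟨M + N, fun ω => (abs_add_le _ _).trans (add_le_add (hM ω) (hN ω))⟩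
  zero_mem' := ⟨0, fun ω => by simp⟩
  smul_mem' := by
    rintro c f ⟨M, hM⟩
    exact ⟨|c| * M, fun ω => by
      simpa [abs_mul] using mul_le_mul_of_nonneg_left (hM ω) (abs_nonneg c)⟩

/-- The type of gambles: bounded functions `Ω → ℝ`. -/
abbrev Gamble (Ω : Type v) := GambleSpace Ω

/-- Pointwise order on gambles: `gle f g` means `f ≤ g` pointwise. -/
def gle {Ω : Type v} (f g : Gamble Ω) : Prop := ∀ ω, (f : Ω → ℝ) ω ≤ (g : Ω → ℝ) ω

/-- Gambles weakly dominating `0`. -/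
def Gpos (Ω : Type v) : Set (Gamble Ω) := {g | gle 0 g ∧ g ≠ 0}

/-- Positive linear hull: finite positive combinations of members of `B`. -/
def posi {Ω : Type v} (B : Set (Gamble Ω)) : Set (Gamble Ω) :=
  {f | ∃ n : ℕ, 0 < n ∧ ∃ (l : Fin n → ℝ) (g : Fin n → Gamble Ω),
    (∀ i, 0 < l i) ∧ (∀ i, g i ∈ B) ∧ f = ∑ i, l i • g i}

/-- Natural extension of a set of gambles. -/
def desext {Ω : Type v} (E : Set (Gamble Ω)) : Set (Gamble Ω) := posi (E ∪ Gpos Ω)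

/-- Coherence for a set of desirable gambles. -/
def CoherentD {Ω : Type v} (D : Set (Gamble Ω)) : Prop :=
  (0 : Gamble Ω) ∉ D ∧ Gpos Ω ⊆ D ∧
  (∀ g ∈ D, ∀ l : ℝ, 0 < l → l • g ∈ D) ∧
  (∀ f ∈ D, ∀ g ∈ D, f + g ∈ D)

/-- Coherence for a set of desirable gamble sets. -/
def CoherentK {Ω : Type v} (K : Set (Set (Gamble Ω))) : Prop :=
  (∅ : Set (Gamble Ω)) ∉ K ∧
  (∀ A ∈ K, A \ {0} ∈ K) ∧
  (∀ g ∈ Gpos Ω, ({g} : Set (Gamble Ω)) ∈ K) ∧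
  (∀ A ∈ K, ∀ B : Set (Gamble Ω), A ⊆ B → B ∈ K) ∧
  (∀ A ∈ K, ∀ F : Gamble Ω → Gamble Ω, (∀ g ∈ A, gle g (F g)) → F '' A ∈ K) ∧
  (∀ n : ℕ, 0 < n → ∀ A : Fin n → Set (Gamble Ω), (∀ i, A i ∈ K) →
    ∀ F : (Fin n → Gamble Ω) → Gamble Ω,
    (∀ g : Fin n → Gamble Ω, (∀ i, g i ∈ A i) → F g ∈ posi (Set.range g)) →
    {b | ∃ g : Fin n → Gamble Ω, (∀ i, g i ∈ A i) ∧ b = F g} ∈ K)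

/-- The infinite addition axiom. -/
def KAddInf {Ω : Type v} (K : Set (Set (Gamble Ω))) : Prop :=
  ∀ (I : Type v) (A : I → Set (Gamble Ω)), (∀ i, A i ∈ K) →
    ∀ F : (I → Gamble Ω) → Gamble Ω,
    (∀ g : I → Gamble Ω, (∀ i, g i ∈ A i) → F g ∈ posi (Set.range g)) →
    {b | ∃ g : I → Gamble Ω, (∀ i, g i ∈ A i) ∧ b = F g} ∈ K

/-- Natural extension of a set of gamble sets (nonempty case). -/
def ExtK {Ω : Type v} (𝒜 : Set (Set (Gamble Ω))) : Set (Set (Gamble Ω)) :=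
  {B | ∃ n : ℕ, 0 < n ∧ ∃ A : Fin n → Set (Gamble Ω), (∀ i, A i ∈ 𝒜) ∧
    ∀ g : Fin n → Gamble Ω, (∀ i, g i ∈ A i) →
      (0 : Gamble Ω) ∉ desext (Set.range g) → ∃ f ∈ B, f ∈ desext (Set.range g)}

section Posi

variable {Ω : Type v} {B : Set (Gamble Ω)}

lemma subset_posi : B ⊆ posi B := fun g hg =>
  ⟨1, one_pos, fun _ => 1, fun _ => g, fun _ => one_pos, fun _ => hg, by simp⟩

lemma smul_mem_posi {f : Gamble Ω} (hf : f ∈ posi B) {c : ℝ} (hc : 0 < c) : c • f ∈ posi B := by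
  obtain ⟨n, hn, l, g, hl, hg, rfl⟩ := hf
  exact ⟨n, hn, fun i => c * l i, g, fun i => mul_pos hc (hl i), hg, by
    simp only [Finset.smul_sum, smul_smul]⟩

lemma add_mem_posi {f f' : Gamble Ω} (hf : f ∈ posi B) (hf' : f' ∈ posi B) :
    f + f' ∈ posi B := by
  obtain ⟨n, hn, l, g, hl, hg, rfl⟩ := hf
  obtain ⟨m, -, l', g', hl', hg', rfl⟩ := hf'
  refine ⟨n + m, by omega, Fin.append l l', Fin.append g g', ?_, ?_, ?_⟩
  · exact Fin.addCases (by simpa using hl) (by simpa using hl')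
  · exact Fin.addCases (by simpa using hg) (by simpa using hg')
  · simp only [Fin.sum_univ_add, Fin.append_left, Fin.append_right]

lemma posi_subset {S : Set (Gamble Ω)} (hBS : B ⊆ S)
    (hsmul : ∀ g ∈ S, ∀ c : ℝ, 0 < c → c • g ∈ S) (hadd : ∀ f ∈ S, ∀ g ∈ S, f + g ∈ S) :
    posi B ⊆ S := by
  rintro _ ⟨n, hn, l, g, hl, hg, rfl⟩
  exact Finset.sum_induction_nonempty _ (· ∈ S) (fun a b ha hb => hadd a ha b hb)
    (Finset.univ_nonempty_iff.mpr ⟨⟨0, hn⟩⟩) fun i _ => hsmul _ (hBS (hg i)) _ (hl i)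

end Posi

lemma coherentD_desext {Ω : Type v} {E : Set (Gamble Ω)} (h0 : (0 : Gamble Ω) ∉ desext E) :
    CoherentD (desext E) :=
  ⟨h0, subset_posi.trans' Set.subset_union_right, fun _ hg _ hc => smul_mem_posi hg hc,
    fun _ hf _ hg => add_mem_posi hf hg⟩

lemma CoherentD.desext_eq {Ω : Type v} {D : Set (Gamble Ω)} (hD : CoherentD D) :
    desext D = D :=
  (posi_subset (Set.union_subset subset_rfl hD.2.1) hD.2.2.1 hD.2.2.2).antisymm
    (subset_posi.trans' Set.subset_union_left)

theorem stmt3_general {Ω : Type v} (D : Set (Gamble Ω)) :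
    CoherentD D ↔ ((0 : Gamble Ω) ∉ D ∧ ∃ E : Set (Gamble Ω), D = desext E) := by
  refine ⟨fun hD => ⟨hD.1, D, hD.desext_eq.symm⟩, ?_⟩
  rintro ⟨h0, E, rfl⟩
  exact coherentD_desext h0

theorem stmt3 {Ω : Type v} [Nonempty Ω] (D : Set (Gamble Ω)) :
    CoherentD D ↔ ((0 : Gamble Ω) ∉ D ∧ ∃ E : Set (Gamble Ω), D = desext E) :=
  stmt3_general D
end

section
/- Assume gamble sets are finite. If 𝒦 ⊆ 𝒫_fin(𝒢) satisfies KAdd and contains {g} for every g ⪈ 0, then 𝒦 satisfies the dominators axiom: if A ∈ 𝒦 and for each g ∈ A, f_g is a gamble with f_g ≥ g pointwise, then {f_g : g ∈ A} ∈ 𝒦. -/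
open scoped BigOperators

universe u v

variable {Ω : Type v}

theorem mem_posi_of_mem {B : Set (Gamble Ω)} {g : Gamble Ω} (hg : g ∈ B) : g ∈ posi B :=
  ⟨1, one_pos, fun _ => 1, fun _ => g, fun _ => one_pos, fun _ => hg, by simp⟩

theorem add_mem_posi_s11 {B : Set (Gamble Ω)} {g h : Gamble Ω} (hg : g ∈ B) (hh : h ∈ B) :
    g + h ∈ posi B := by
  refine ⟨2, two_pos, fun _ => 1, ![g, h], fun _ => one_pos, fun i => ?_, by simp⟩
  fin_cases i <;> assumption

theorem sub_mem_Gpos {f g : Gamble Ω} (hle : gle g f) (hne : f ≠ g) : f - g ∈ Gpos Ω :=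
  ⟨fun ω => by simpa using hle ω, sub_ne_zero.mpr hne⟩

def KAdd (K : Set (Set (Gamble Ω))) : Prop :=
  ∀ n : ℕ, 0 < n → ∀ A : Fin n → Set (Gamble Ω), (∀ i, A i ∈ K) →
    ∀ F : (Fin n → Gamble Ω) → Gamble Ω,
    (∀ g : Fin n → Gamble Ω, (∀ i, g i ∈ A i) → F g ∈ posi (Set.range g)) →
    {b | ∃ g : Fin n → Gamble Ω, (∀ i, g i ∈ A i) ∧ b = F g} ∈ K

namespace KAdd

variable {K : Set (Set (Gamble Ω))}

theorem of_fintype (hK : KAdd K) {ι : Type*} [Fintype ι] [Nonempty ι]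
    (A : ι → Set (Gamble Ω)) (hA : ∀ i, A i ∈ K) (Φ : (ι → Gamble Ω) → Gamble Ω)
    (hΦ : ∀ x : ι → Gamble Ω, (∀ i, x i ∈ A i) → Φ x ∈ posi (Set.range x)) :
    {b | ∃ x : ι → Gamble Ω, (∀ i, x i ∈ A i) ∧ b = Φ x} ∈ K := by
  let e := Fintype.equivFin ι
  have key := hK _ Fintype.card_pos (A ∘ e.symm) (fun _ => hA _) (fun y => Φ (y ∘ e))
    (fun y hy => by
      simpa only [EquivLike.range_comp] using hΦ (y ∘ e) fun i => by simpa using hy (e i))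
  convert key using 1
  ext b
  constructor
  · rintro ⟨x, hx, rfl⟩
    exact ⟨x ∘ e.symm, fun _ => hx _, by simp [Function.comp_assoc]⟩
  · rintro ⟨y, hy, rfl⟩
    exact ⟨y ∘ e, fun i => by simpa using hy (e i), rfl⟩

theorem image_mem_of_le (hK : KAdd K) (hpos : ∀ g ∈ Gpos Ω, ({g} : Set (Gamble Ω)) ∈ K)
    {A : Set (Gamble Ω)} (hA : A ∈ K) (hfin : A.Finite) (F : Gamble Ω → Gamble Ω)
    (hF : ∀ g ∈ A, gle g (F g)) : F '' A ∈ K := by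
  -- One extra summand `{F a - a}` for each `a ∈ A` that `F` moves, and `F a = a + (F a - a)`.
  let ι := Option {a // a ∈ A ∧ F a ≠ a}
  have : Finite {a // a ∈ A ∧ F a ≠ a} := (hfin.subset fun _ h => And.left h).to_subtype
  have : Fintype ι := Fintype.ofFinite ι
  let B : ι → Set (Gamble Ω) := fun i => i.elim A fun a => {F a - a}
  have hB : ∀ i, B i ∈ K
    | none => hA
    | some a => hpos _ (sub_mem_Gpos (hF a a.2.1) a.2.2)
  let x₀ (g : Gamble Ω) : ι → Gamble Ω := fun i => i.elim g fun a => F a - a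
  have hx₀ : ∀ g ∈ A, ∀ i, x₀ g i ∈ B i
    | _, hg, none => hg
    | _, _, some _ => rfl
  convert hK.of_fintype B hB (fun x => F (x none)) (fun x hx => ?_) using 1
  · ext b
    constructor
    · rintro ⟨g, hg, rfl⟩
      exact ⟨x₀ g, hx₀ g hg, rfl⟩
    · rintro ⟨x, hx, rfl⟩
      exact ⟨x none, hx none, rfl⟩
  · by_cases hmoved : F (x none) = x none
    · rw [hmoved]
      exact mem_posi_of_mem ⟨none, rfl⟩
    · have hsome : x (some ⟨x none, hx none, hmoved⟩) = F (x none) - x none := hx (some _)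
      have hsplit : F (x none) = x none + x (some ⟨x none, hx none, hmoved⟩) := by
        rw [hsome, add_sub_cancel]
      rw [hsplit]
      exact add_mem_posi_s11 ⟨_, rfl⟩ ⟨_, rfl⟩

end KAdd

theorem stmt11_general {Ω : Type v} (K : Set (Set (Gamble Ω)))
    (hfin : ∀ A ∈ K, A.Finite)
    (hpos : ∀ g ∈ Gpos Ω, ({g} : Set (Gamble Ω)) ∈ K)
    (hadd : ∀ n : ℕ, 0 < n → ∀ A : Fin n → Set (Gamble Ω), (∀ i, A i ∈ K) →
      ∀ F : (Fin n → Gamble Ω) → Gamble Ω,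
      (∀ g : Fin n → Gamble Ω, (∀ i, g i ∈ A i) → F g ∈ posi (Set.range g)) →
      {b | ∃ g : Fin n → Gamble Ω, (∀ i, g i ∈ A i) ∧ b = F g} ∈ K) :
    ∀ A ∈ K, ∀ F : Gamble Ω → Gamble Ω, (∀ g ∈ A, gle g (F g)) → F '' A ∈ K :=
  fun A hA F hF => KAdd.image_mem_of_le hadd hpos hA (hfin A hA) F hF

theorem stmt11 {Ω : Type v} [Nonempty Ω] (K : Set (Set (Gamble Ω)))
    (hfin : ∀ A ∈ K, A.Finite)
    (hpos : ∀ g ∈ Gpos Ω, ({g} : Set (Gamble Ω)) ∈ K)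
    (hadd : ∀ n : ℕ, 0 < n → ∀ A : Fin n → Set (Gamble Ω), (∀ i, A i ∈ K) →
      ∀ F : (Fin n → Gamble Ω) → Gamble Ω,
      (∀ g : Fin n → Gamble Ω, (∀ i, g i ∈ A i) → F g ∈ posi (Set.range g)) →
      {b | ∃ g : Fin n → Gamble Ω, (∀ i, g i ∈ A i) ∧ b = F g} ∈ K) :
    ∀ A ∈ K, ∀ F : Gamble Ω → Gamble Ω, (∀ g ∈ A, gle g (F g)) → F '' A ∈ K :=
  stmt11_general K hfin hpos hadd
end

section
/- Let 𝔇 be a nonempty collection of nonempty sets 𝔻 of coherent sets of desirable gambles, and suppose 𝔇 is downwards closed in the sense that for all 𝔻₁, 𝔻₂ ∈ 𝔇 there is 𝔻 ∈ 𝔇 with 𝔻 ⊆ 𝔻₁ ∩ 𝔻₂. Define 𝒦_𝔇 := {B ⊆ 𝒢 : ∃𝔻 ∈ 𝔇 such that ∀D ∈ 𝔻, B ∩ D ≠ ∅}. Then 𝒦_𝔇 is a coherent set of desirable gamble sets. -/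
open scoped BigOperators

universe u v

/-! Each coherence axiom for `𝒦_𝔇` reduces, one `D` at a time, to the corresponding closure
property of the coherent set `D`; for the addition axiom the finitely many witnesses `𝔻ᵢ` are
first replaced by one common `𝔻 ∈ 𝔇` below all of them, which exists because `𝔇` is downwards
directed. -/

/-- The set `𝒦_𝔇` of the paper. -/
def hittingSets {α : Type*} (𝔇 : Set (Set (Set α))) : Set (Set α) :=
  {B | ∃ 𝔻 ∈ 𝔇, ∀ D ∈ 𝔻, (B ∩ D).Nonempty}

lemma DirectedOn.exists_subset_forall {β ι : Type*} [Finite ι] {𝔇 : Set (Set β)}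
    (hne : 𝔇.Nonempty) (hdir : DirectedOn (· ⊇ ·) 𝔇) (f : ι → Set β) (hf : ∀ i, f i ∈ 𝔇) :
    ∃ 𝔻 ∈ 𝔇, ∀ i, 𝔻 ⊆ f i := by
  have : Nonempty 𝔇 := hne.to_subtype
  have := Fintype.ofFinite ι
  obtain ⟨⟨𝔻, h𝔻⟩, hle⟩ := (directedOn_iff_directed.1 hdir).finset_le
    (Finset.univ.image fun i => (⟨f i, hf i⟩ : 𝔇))
  exact ⟨𝔻, h𝔻, fun i => hle _ (Finset.mem_image_of_mem _ (Finset.mem_univ i))⟩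

namespace hittingSets

variable {α : Type*} {𝔇 : Set (Set (Set α))}

lemma empty_notMem (h : ∀ 𝔻 ∈ 𝔇, 𝔻.Nonempty) : ∅ ∉ hittingSets 𝔇 := by
  rintro ⟨𝔻, h𝔻, hmeet⟩
  obtain ⟨D, hD⟩ := h 𝔻 h𝔻
  simpa using hmeet D hD

lemma singleton_mem (hne : 𝔇.Nonempty) {x : α} (hx : ∀ 𝔻 ∈ 𝔇, ∀ D ∈ 𝔻, x ∈ D) :
    {x} ∈ hittingSets 𝔇 := by
  obtain ⟨𝔻, h𝔻⟩ := hne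
  exact ⟨𝔻, h𝔻, fun D hD => ⟨x, rfl, hx 𝔻 h𝔻 D hD⟩⟩

lemma mem_of_subset {A B : Set α} (hA : A ∈ hittingSets 𝔇) (hAB : A ⊆ B) :
    B ∈ hittingSets 𝔇 := by
  obtain ⟨𝔻, h𝔻, hmeet⟩ := hA
  exact ⟨𝔻, h𝔻, fun D hD => (hmeet D hD).mono (Set.inter_subset_inter_left D hAB)⟩

lemma image_mem {A : Set α} (hA : A ∈ hittingSets 𝔇) (F : α → α)
    (hF : ∀ 𝔻 ∈ 𝔇, ∀ D ∈ 𝔻, ∀ a ∈ A, a ∈ D → F a ∈ D) : F '' A ∈ hittingSets 𝔇 := by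
  obtain ⟨𝔻, h𝔻, hmeet⟩ := hA
  refine ⟨𝔻, h𝔻, fun D hD => ?_⟩
  obtain ⟨a, haA, haD⟩ := hmeet D hD
  exact ⟨F a, Set.mem_image_of_mem F haA, hF 𝔻 h𝔻 D hD a haA haD⟩

lemma diff_singleton_mem {A : Set α} (hA : A ∈ hittingSets 𝔇) {x : α}
    (hx : ∀ 𝔻 ∈ 𝔇, ∀ D ∈ 𝔻, x ∉ D) : A \ {x} ∈ hittingSets 𝔇 := by
  obtain ⟨𝔻, h𝔻, hmeet⟩ := hA
  refine ⟨𝔻, h𝔻, fun D hD => ?_⟩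
  obtain ⟨a, haA, haD⟩ := hmeet D hD
  exact ⟨a, ⟨haA, fun hax => hx 𝔻 h𝔻 D hD (hax ▸ haD)⟩, haD⟩

lemma combination_mem {ι : Type*} [Finite ι] (hne : 𝔇.Nonempty)
    (hdir : DirectedOn (· ⊇ ·) 𝔇) {A : ι → Set α} (hA : ∀ i, A i ∈ hittingSets 𝔇)
    (F : (ι → α) → α)
    (hF : ∀ 𝔻 ∈ 𝔇, ∀ D ∈ 𝔻, ∀ g : ι → α, (∀ i, g i ∈ A i) → (∀ i, g i ∈ D) → F g ∈ D) :
    {b | ∃ g : ι → α, (∀ i, g i ∈ A i) ∧ b = F g} ∈ hittingSets 𝔇 := by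
  choose 𝔻 h𝔻 hmeet using hA
  obtain ⟨𝔻₀, h𝔻₀, hsub⟩ := hdir.exists_subset_forall hne 𝔻 h𝔻
  refine ⟨𝔻₀, h𝔻₀, fun D hD => ?_⟩
  choose g hgA hgD using fun i => hmeet i D (hsub i hD)
  exact ⟨F g, ⟨g, hgA, rfl⟩, hF 𝔻₀ h𝔻₀ D hD g hgA hgD⟩

end hittingSets

namespace CoherentD

variable {Ω : Type v} {D : Set (Gamble Ω)}

lemma sum_smul_mem (hD : CoherentD D) {ι : Type*} {s : Finset ι} (hs : s.Nonempty)
    {l : ι → ℝ} {g : ι → Gamble Ω} (hl : ∀ i ∈ s, 0 < l i) (hg : ∀ i ∈ s, g i ∈ D) :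
    ∑ i ∈ s, l i • g i ∈ D := by
  induction hs using Finset.Nonempty.cons_induction with
  | singleton i => simpa using hD.2.2.1 _ (hg i (by simp)) _ (hl i (by simp))
  | cons i s hi hs ih =>
    rw [Finset.sum_cons]
    simp only [Finset.mem_cons, forall_eq_or_imp] at hl hg
    exact hD.2.2.2 _ (hD.2.2.1 _ hg.1 _ hl.1) _ (ih hl.2 hg.2)

lemma posi_subset (hD : CoherentD D) {S : Set (Gamble Ω)} (hS : S ⊆ D) : posi S ⊆ D := by
  rintro f ⟨n, hn, l, g, hl, hg, rfl⟩
  have : Nonempty (Fin n) := ⟨⟨0, hn⟩⟩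
  exact hD.sum_smul_mem Finset.univ_nonempty (fun i _ => hl i) fun i _ => hS (hg i)

lemma mem_of_gle (hD : CoherentD D) {f g : Gamble Ω} (hf : f ∈ D) (hfg : gle f g) : g ∈ D := by
  by_cases h : g = f
  · exact h ▸ hf
  have hpos : g - f ∈ Gpos Ω :=
    ⟨fun ω => by simpa using hfg ω, sub_ne_zero.mpr h⟩
  simpa using hD.2.2.2 f hf (g - f) (hD.2.1 hpos)

end CoherentD

theorem stmt15_general {Ω : Type v} (𝔇 : Set (Set (Set (Gamble Ω))))
    (h1 : 𝔇.Nonempty)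
    (h2 : ∀ 𝔻 ∈ 𝔇, 𝔻.Nonempty ∧ ∀ D ∈ 𝔻, CoherentD D)
    (h3 : ∀ 𝔻₁ ∈ 𝔇, ∀ 𝔻₂ ∈ 𝔇, ∃ 𝔻 ∈ 𝔇, 𝔻 ⊆ 𝔻₁ ∩ 𝔻₂) :
    CoherentK {B : Set (Gamble Ω) | ∃ 𝔻 ∈ 𝔇, ∀ D ∈ 𝔻, (B ∩ D).Nonempty} := by
  have hcoh : ∀ 𝔻 ∈ 𝔇, ∀ D ∈ 𝔻, CoherentD D := fun 𝔻 h𝔻 => (h2 𝔻 h𝔻).2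
  have hdir : DirectedOn (· ⊇ ·) 𝔇 := fun 𝔻₁ h₁ 𝔻₂ h₂ => by
    obtain ⟨𝔻, h𝔻, hsub⟩ := h3 𝔻₁ h₁ 𝔻₂ h₂
    exact ⟨𝔻, h𝔻, Set.subset_inter_iff.1 hsub⟩
  refine ⟨hittingSets.empty_notMem fun 𝔻 h𝔻 => (h2 𝔻 h𝔻).1,
    fun A hA => hittingSets.diff_singleton_mem hA fun 𝔻 h𝔻 D hD => (hcoh 𝔻 h𝔻 D hD).1,
    fun g hg => hittingSets.singleton_mem h1 fun 𝔻 h𝔻 D hD => (hcoh 𝔻 h𝔻 D hD).2.1 hg,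
    fun A hA B => hittingSets.mem_of_subset hA,
    fun A hA F hF => hittingSets.image_mem hA F fun 𝔻 h𝔻 D hD a ha haD =>
      (hcoh 𝔻 h𝔻 D hD).mem_of_gle haD (hF a ha),
    fun n _ A hA F hF => hittingSets.combination_mem h1 hdir hA F
      fun 𝔻 h𝔻 D hD g hgA hgD =>
        (hcoh 𝔻 h𝔻 D hD).posi_subset (Set.range_subset_iff.2 hgD) (hF g hgA)⟩

theorem stmt15 {Ω : Type v} [Nonempty Ω] (𝔇 : Set (Set (Set (Gamble Ω))))
    (h1 : 𝔇.Nonempty)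
    (h2 : ∀ 𝔻 ∈ 𝔇, 𝔻.Nonempty ∧ ∀ D ∈ 𝔻, CoherentD D)
    (h3 : ∀ 𝔻₁ ∈ 𝔇, ∀ 𝔻₂ ∈ 𝔇, ∃ 𝔻 ∈ 𝔇, 𝔻 ⊆ 𝔻₁ ∩ 𝔻₂) :
    CoherentK {B : Set (Gamble Ω) | ∃ 𝔻 ∈ 𝔇, ∀ D ∈ 𝔻, (B ∩ D).Nonempty} :=
  stmt15_general 𝔇 h1 h2 h3
end
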